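/- Let H, U be separable Hilbert spaces, f : P_2(H) → U with Λ-continuously Fréchet differentiable lift f̂ on L^2(Ω,H), and X_0 ∈ L^2(Ω,H) taking values x_1,…,x_N with probabilities p_k > 0, μ_0 = law(X_0). Let m_{μ_0}(B) := Df̂(X_0)(1_{X_0 ∈ B} ·) for B ∈ B(H). Then the L(H,U)-valued step map g(x) := Σ_{k=1}^N (m_{μ_0}({x_k})/μ_0({x_k})) 1_{{x_k}}(x) satisfies E[1_A · g(X_0)] = m_{Df̂(X_0)}(A) for all A ∈ F, i.e. g is a μ_0-version of the Radon–Nikodym derivative dm_{μ_0}/dμ_0. -/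

import Mathlib

/-!
Let `m S = Df̂(X₀)(u 1_S)`. For `S ⊆ {X₀ = xₖ}`, the law of `X₀ + t u 1_S` depends on `S` only
through `P S`, so by law invariance of `f̂` the directional derivatives `m S` depend only on
`P S` there. As `P` is atomless, Sierpiński's theorem provides subsets of `{X₀ = xₖ}` of every
intermediate measure; a finitely additive set function which depends only on the measure of
its argument and is small on small sets is then proportional to `P` on `{X₀ = xₖ}`: exactly
at rational ratios by cutting into equal pieces, and in general by approximation. Summing
`m (A ∩ {X₀ = xₖ}) = P (A ∩ {X₀ = xₖ}) / P {X₀ = xₖ} • m {X₀ = xₖ}` over `k` gives the claim.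
-/

open MeasureTheory ENNReal Filter

noncomputable section

/-- The `2`-semivariation norm (with general exponent `p`) of an operator on `L^p`. -/
def opSemiVar {Ω E F : Type*} [MeasurableSpace Ω] (P : Measure Ω) [IsFiniteMeasure P]
    [NormedAddCommGroup E] [NormedSpace ℝ E] [NormedAddCommGroup F] [NormedSpace ℝ F]
    (p : ℝ≥0∞) [Fact (1 ≤ p)] (L : Lp E p P →L[ℝ] F) : ℝ≥0∞ :=
  ⨆ (n : ℕ) (As : Fin n → Set Ω) (xs : Fin n → E) (hAs : ∀ i, MeasurableSet (As i))
    (_ : Pairwise (Function.onFun Disjoint As))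
    (_ : eLpNorm (fun ω => ∑ i, (As i).indicator (fun _ => xs i) ω) p P ≤ 1),
    ∑ i, (‖L (indicatorConstLp p (hAs i) (measure_ne_top P (As i)) (xs i))‖₊ : ℝ≥0∞)

theorem HasFDerivAt.apply_eq_of_forall_add_smul_eq {𝕜 E F : Type*} [NontriviallyNormedField 𝕜]
    [NormedAddCommGroup E] [NormedSpace 𝕜 E] [NormedAddCommGroup F] [NormedSpace 𝕜 F]
    {f : E → F} {f' : E →L[𝕜] F} {x v w : E} (hf : HasFDerivAt f f' x)
    (h : ∀ t : 𝕜, f (x + t • v) = f (x + t • w)) : f' v = f' w :=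
  (hf.hasLineDerivAt v).unique (by simpa only [HasLineDerivAt, h] using hf.hasLineDerivAt w)

namespace MeasureTheory.Measure

variable {Ω : Type*} [MeasurableSpace Ω]

/-- Atomless in the sense of measure theory; Mathlib's `NoAtoms` only asks singletons to be null. -/
def IsAtomless (μ : Measure Ω) : Prop :=
  ∀ A : Set Ω, MeasurableSet A → 0 < μ A →
    ∃ B : Set Ω, MeasurableSet B ∧ B ⊆ A ∧ 0 < μ B ∧ μ B < μ A

theorem exists_greedy_extension (μ : Measure Ω) {A : Set Ω} {r : ℝ≥0∞} (hr : r ≠ ∞) {S : Set Ω}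
    (hSr : μ S ≤ r) : ∃ S', MeasurableSet S' ∧ S' ⊆ A \ S ∧ μ S + μ S' ≤ r ∧
      ∀ B, MeasurableSet B → B ⊆ A \ S → μ S + μ B ≤ r → μ B / 2 ≤ μ S' := by
  set ε := ⨆ (B : Set Ω) (_ : MeasurableSet B ∧ B ⊆ A \ S ∧ μ S + μ B ≤ r), μ B
  have le_ε : ∀ B, MeasurableSet B → B ⊆ A \ S → μ S + μ B ≤ r → μ B ≤ ε :=
    fun B hB hBA hBr => le_iSup₂_of_le B ⟨hB, hBA, hBr⟩ le_rfl
  rcases eq_or_ne ε 0 with hε | hε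
  · refine ⟨∅, .empty, Set.empty_subset _, by simpa using hSr, fun B hB hBA hBr => ?_⟩
    simp [le_antisymm ((le_ε B hB hBA hBr).trans hε.le) zero_le]
  have hε_top : ε ≠ ∞ := ne_top_of_le_ne_top hr (iSup₂_le fun B hB => le_add_self.trans hB.2.2)
  obtain ⟨S', ⟨hS', hS'A, hS'r⟩, hS'ε⟩ : ∃ S', (MeasurableSet S' ∧ S' ⊆ A \ S ∧ μ S + μ S' ≤ r) ∧
      ε / 2 < μ S' := by
    have h := ENNReal.half_lt_self hε hε_top
    simp only [ε, lt_iSup_iff, exists_prop] at h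
    exact h
  exact ⟨S', hS', hS'A, hS'r, fun B hB hBA hBr =>
    (ENNReal.div_le_div_right (le_ε B hB hBA hBr) 2).trans hS'ε.le⟩

namespace IsAtomless

variable {μ : Measure Ω} [IsFiniteMeasure μ]

theorem exists_subset_measure_pos_le_half (hμ : μ.IsAtomless) {A : Set Ω} (hA : MeasurableSet A)
    (hA₀ : 0 < μ A) : ∃ B ⊆ A, MeasurableSet B ∧ 0 < μ B ∧ μ B ≤ μ A / 2 := by
  obtain ⟨B, hB, hBA, hB₀, hBA'⟩ := hμ A hA hA₀
  have hdiff : μ (A \ B) = μ A - μ B := measure_sdiff hBA hB.nullMeasurableSet (measure_ne_top μ B)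
  rcases le_or_gt (μ B) (μ A / 2) with h | h
  · exact ⟨B, hBA, hB, hB₀, h⟩
  · refine ⟨A \ B, Set.sdiff_subset, hA.diff hB, by rwa [hdiff, tsub_pos_iff_lt], ?_⟩
    calc μ (A \ B) = μ A - μ B := hdiff
      _ ≤ μ A - μ A / 2 := tsub_le_tsub_left h.le _
      _ = μ A / 2 := ENNReal.sub_half (measure_ne_top μ A)

theorem exists_subset_measure_pos_lt (hμ : μ.IsAtomless) {A : Set Ω} (hA : MeasurableSet A)
    (hA₀ : 0 < μ A) {d : ℝ≥0∞} (hd : 0 < d) : ∃ B ⊆ A, MeasurableSet B ∧ 0 < μ B ∧ μ B < d := by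
  have halving : ∀ n : ℕ, ∃ B ⊆ A, MeasurableSet B ∧ 0 < μ B ∧ μ B ≤ μ A * 2⁻¹ ^ n := by
    intro n
    induction n with
    | zero => exact ⟨A, subset_rfl, hA, hA₀, by simp⟩
    | succ n ih =>
      obtain ⟨B, hBA, hB, hB₀, hBle⟩ := ih
      obtain ⟨C, hCB, hC, hC₀, hCle⟩ := hμ.exists_subset_measure_pos_le_half hB hB₀
      refine ⟨C, hCB.trans hBA, hC, hC₀, ?_⟩
      calc μ C ≤ μ B / 2 := hCle
        _ ≤ μ A * 2⁻¹ ^ n / 2 := by gcongr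
        _ = μ A * 2⁻¹ ^ (n + 1) := by rw [pow_succ, div_eq_mul_inv, mul_assoc]
  obtain ⟨n, hn⟩ := ENNReal.exists_inv_two_pow_lt (ENNReal.div_pos hd.ne' (measure_ne_top μ A)).ne'
  obtain ⟨B, hBA, hB, hB₀, hBle⟩ := halving n
  refine ⟨B, hBA, hB, hB₀, hBle.trans_lt ?_⟩
  calc μ A * 2⁻¹ ^ n < μ A * (d / μ A) :=
        ENNReal.mul_lt_mul_right hA₀.ne' (measure_ne_top μ A) hn
    _ ≤ d := ENNReal.mul_div_le

theorem exists_subset_measure_eq (hμ : μ.IsAtomless) {A : Set Ω} (hA : MeasurableSet A)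
    {r : ℝ≥0∞} (hr : r ≤ μ A) : ∃ B ⊆ A, MeasurableSet B ∧ μ B = r := by
  have hr_top : r ≠ ∞ := ne_top_of_le_ne_top (measure_ne_top μ A) hr
  choose! next hnext_meas hnext_sub hnext_le hnext_greedy using
    fun S : Set Ω => exists_greedy_extension μ (A := A) hr_top (S := S)
  let S : ℕ → Set Ω := fun n => Nat.rec ∅ (fun _ T => T ∪ next T) n
  have hS_succ : ∀ n, S (n + 1) = S n ∪ next (S n) := fun _ => rfl
  have hμS_succ : ∀ n, MeasurableSet (S n) → μ (S n) ≤ r →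
      μ (S (n + 1)) = μ (S n) + μ (next (S n)) := fun n _ hSr =>
    measure_union (Set.disjoint_of_subset_right (hnext_sub _ hSr) Set.disjoint_sdiff_right)
      (hnext_meas _ hSr)
  have hS : ∀ n, MeasurableSet (S n) ∧ S n ⊆ A ∧ μ (S n) ≤ r := by
    intro n
    induction n with
    | zero => exact ⟨.empty, Set.empty_subset _, by simp [S]⟩
    | succ n ih =>
      obtain ⟨hSm, hSA, hSr⟩ := ih
      refine ⟨hSm.union (hnext_meas _ hSr), ?_, ?_⟩
      · exact Set.union_subset hSA ((hnext_sub _ hSr).trans Set.sdiff_subset)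
      · exact (hμS_succ n hSm hSr).trans_le (hnext_le _ hSr)
  have hmono : Monotone S := monotone_nat_of_le_succ fun n => Set.subset_union_left
  set T := ⋃ n, S n
  have hTm : MeasurableSet T := .iUnion fun n => (hS n).1
  have hTr : μ T ≤ r := by
    rw [hmono.measure_iUnion]
    exact iSup_le fun n => (hS n).2.2
  refine ⟨T, Set.iUnion_subset fun n => (hS n).2.1, hTm, le_antisymm hTr (not_lt.1 fun hlt => ?_)⟩
  have hAT : 0 < μ (A \ T) := by
    rw [measure_sdiff (Set.iUnion_subset fun n => (hS n).2.1) hTm.nullMeasurableSet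
      (measure_ne_top μ T)]
    exact tsub_pos_iff_lt.2 (hlt.trans_le hr)
  obtain ⟨C, hCA, hC, hC₀, hCr⟩ :=
    hμ.exists_subset_measure_pos_lt (hA.diff hTm) hAT (tsub_pos_iff_lt.2 hlt)
  have hgrow : ∀ n, μ (S n) + μ C / 2 ≤ μ (S (n + 1)) := by
    intro n
    obtain ⟨hSm, -, hSr⟩ := hS n
    rw [hμS_succ n hSm hSr]
    refine add_le_add_right (hnext_greedy _ hSr C hC
      (hCA.trans (Set.sdiff_subset_sdiff_right (Set.subset_iUnion S n))) ?_) _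
    calc μ (S n) + μ C ≤ μ T + (r - μ T) :=
          add_le_add (measure_mono (Set.subset_iUnion S n)) hCr.le
      _ = r := add_tsub_cancel_of_le hTr
  have hlinear : ∀ n : ℕ, n * (μ C / 2) ≤ μ (S n) := by
    intro n
    induction n with
    | zero => simp
    | succ n ih =>
      calc ((n + 1 : ℕ) : ℝ≥0∞) * (μ C / 2) = n * (μ C / 2) + μ C / 2 := by push_cast; ring
        _ ≤ μ (S (n + 1)) := (add_le_add_left ih _).trans (hgrow n)
  obtain ⟨n, hn⟩ := ENNReal.exists_nat_mul_gt (ENNReal.half_pos hC₀.ne').ne' hr_top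
  exact (hn.trans_le ((hlinear n).trans (hS n).2.2)).false

theorem exists_subset_measureReal_eq (hμ : μ.IsAtomless) {A : Set Ω} (hA : MeasurableSet A)
    {r : ℝ} (hr₀ : 0 ≤ r) (hr : r ≤ μ.real A) : ∃ B ⊆ A, MeasurableSet B ∧ μ.real B = r := by
  obtain ⟨B, hBA, hB, hμB⟩ :=
    hμ.exists_subset_measure_eq hA (ENNReal.ofReal_le_of_le_toReal hr)
  exact ⟨B, hBA, hB, by rw [measureReal_def, hμB, ENNReal.toReal_ofReal hr₀]⟩

end IsAtomless

end MeasureTheory.Measure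

namespace MeasureTheory

section Proportional

variable {Ω F : Type*} [MeasurableSpace Ω] {μ : Measure Ω} [IsFiniteMeasure μ]
  {B : Set Ω}

section AddCommGroup

variable [AddCommGroup F] {m : Set Ω → F}

theorem FinMeasAdditive.eq_nsmul_of_measureReal_eq_nsmul (hm : FinMeasAdditive μ m)
    (hμ : μ.IsAtomless)
    (hinv : ∀ A A', MeasurableSet A → MeasurableSet A' → A ⊆ B → A' ⊆ B → μ A = μ A' → m A = m A')
    {A : Set Ω} (hA : MeasurableSet A) (hAB : A ⊆ B) (n : ℕ) :
    ∀ A' ⊆ B, MeasurableSet A' → μ.real A' = n * μ.real A → m A' = n • m A := by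
  induction n with
  | zero =>
    intro A' hA'B hA' h
    have hA'₀ : μ A' = μ ∅ := by
      rw [measure_empty, ← measureReal_eq_zero_iff]; simpa using h
    rw [hinv A' ∅ hA' .empty hA'B (Set.empty_subset B) hA'₀, hm.map_empty_eq_zero, zero_smul]
  | succ n ih =>
    intro A' hA'B hA' h
    obtain ⟨A'', hA''A', hA'', hμA''⟩ := hμ.exists_subset_measureReal_eq hA' (r := n * μ.real A)
      (by positivity) (by rw [h]; push_cast; nlinarith [measureReal_nonneg (μ := μ) (s := A)])
    have hdiff : μ (A' \ A'') = μ A := by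
      rw [← ofReal_measureReal, ← ofReal_measureReal (s := A), measureReal_sdiff hA''A' hA'', h,
        hμA'']
      push_cast; ring_nf
    rw [← Set.union_sdiff_cancel hA''A', hm A'' (A' \ A'') hA'' (hA'.diff hA'')
      (measure_ne_top μ _) (measure_ne_top μ _) Set.disjoint_sdiff_right,
      ih A'' (hA''A'.trans hA'B) hA'' hμA'',
      hinv _ A (hA'.diff hA'') hA (Set.sdiff_subset.trans hA'B) hAB hdiff, succ_nsmul]

theorem FinMeasAdditive.sum_inter_preimage_singleton (hm : FinMeasAdditive μ m) {E ι : Type*}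
    [MeasurableSpace E] [MeasurableSingletonClass E] [Fintype ι] {X : Ω → E} (hX : Measurable X)
    {x : ι → E} (hx : Function.Injective x) (hvals : ∀ ω, ∃ k, X ω = x k) {A : Set Ω}
    (hA : MeasurableSet A) : ∑ k, m (A ∩ X ⁻¹' {x k}) = m A := by
  have hcover : ⋃ k ∈ Finset.univ, A ∩ X ⁻¹' {x k} = A := by
    ext ω
    simpa using fun _ => hvals ω
  have hdisj : ∀ j ∈ Finset.univ, ∀ k ∈ Finset.univ, j ≠ k →
      Disjoint (A ∩ X ⁻¹' {x j}) (A ∩ X ⁻¹' {x k}) := fun j _ k _ hjk =>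
    ((Set.disjoint_singleton.2 (hx.ne hjk)).preimage X).mono Set.inter_subset_right
      Set.inter_subset_right
  rw [← hm.map_iUnion_fin_meas_set_eq_sum _ hm.map_empty_eq_zero _ _
    (fun k => hA.inter (hX (measurableSet_singleton _))) (fun k _ => measure_ne_top μ _) hdisj,
    hcover]

end AddCommGroup

variable [NormedAddCommGroup F] [NormedSpace ℝ F] {m : Set Ω → F}

theorem FinMeasAdditive.exists_norm_sub_measureReal_div_smul_le (hm : FinMeasAdditive μ m)
    (hμ : μ.IsAtomless)
    (hinv : ∀ A A', MeasurableSet A → MeasurableSet A' → A ⊆ B → A' ⊆ B → μ A = μ A' → m A = m A')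
    (hB : MeasurableSet B) {A₁ : Set Ω} (hA₁ : MeasurableSet A₁) (hA₁B : A₁ ⊆ B)
    (hA₁₀ : 0 < μ.real A₁) (n : ℕ)
    (hn : μ.real B = n * μ.real A₁) {A : Set Ω} (hA : MeasurableSet A) (hAB : A ⊆ B) :
    ∃ A' ⊆ A, MeasurableSet A' ∧ μ.real (A \ A') ≤ μ.real A₁ ∧
      ‖m A - (μ.real A / μ.real B) • m B‖ ≤ ‖m (A \ A')‖ + ‖m A₁‖ := by
  set q := μ.real A / μ.real A₁
  set j := ⌊q⌋₊
  have hjq : (j : ℝ) ≤ q := Nat.floor_le (by positivity)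
  have hqj : q < j + 1 := Nat.lt_floor_add_one q
  have hjA : j * μ.real A₁ ≤ μ.real A := (le_div_iff₀ hA₁₀).1 hjq
  obtain ⟨A', hA'A, hA', hμA'⟩ := hμ.exists_subset_measureReal_eq hA (by positivity) hjA
  refine ⟨A', hA'A, hA', ?_, ?_⟩
  · have hAj : μ.real A < (j + 1) * μ.real A₁ := (div_lt_iff₀ hA₁₀).1 hqj
    rw [measureReal_sdiff hA'A hA', hμA']
    linarith
  have hmA' : m A' = j • m A₁ :=
    hm.eq_nsmul_of_measureReal_eq_nsmul hμ hinv hA₁ hA₁B j A' (hA'A.trans hAB) hA' hμA'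
  have hmB : m B = n • m A₁ :=
    hm.eq_nsmul_of_measureReal_eq_nsmul hμ hinv hA₁ hA₁B n B subset_rfl hB hn
  have hn₀ : (n : ℝ) ≠ 0 := by
    rintro h
    rw [h, zero_mul] at hn
    exact hA₁₀.not_ge (hn ▸ measureReal_mono hA₁B)
  have hmA : m A = m A' + m (A \ A') := by
    rw [← hm A' (A \ A') hA' (hA.diff hA') (measure_ne_top μ _) (measure_ne_top μ _)
      Set.disjoint_sdiff_right, Set.union_sdiff_cancel hA'A]
  have hcB : (μ.real A / μ.real B) • m B = q • m A₁ := by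
    rw [hmB, ← Nat.cast_smul_eq_nsmul ℝ, smul_smul, hn]
    congr 1
    simp only [q]
    field_simp
  calc ‖m A - (μ.real A / μ.real B) • m B‖ = ‖m (A \ A') + ((j : ℝ) - q) • m A₁‖ := by
        rw [hmA, hmA', hcB, ← Nat.cast_smul_eq_nsmul ℝ, sub_smul]
        abel_nf
    _ ≤ ‖m (A \ A')‖ + ‖m A₁‖ := by
        refine (norm_add_le _ _).trans (add_le_add le_rfl ?_)
        rw [norm_smul, Real.norm_eq_abs]
        refine mul_le_of_le_one_left (norm_nonneg _) (abs_le.2 ⟨?_, ?_⟩) <;> linarith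

theorem FinMeasAdditive.eq_measureReal_div_smul (hm : FinMeasAdditive μ m) (hμ : μ.IsAtomless)
    (hsmall : ∀ ε > 0, ∃ δ > 0, ∀ A, MeasurableSet A → μ.real A ≤ δ → ‖m A‖ ≤ ε)
    (hinv : ∀ A A', MeasurableSet A → MeasurableSet A' → A ⊆ B → A' ⊆ B → μ A = μ A' → m A = m A')
    (hB : MeasurableSet B)
    {A : Set Ω} (hA : MeasurableSet A) (hAB : A ⊆ B) : m A = (μ.real A / μ.real B) • m B := by
  rcases (measureReal_nonneg (μ := μ) (s := B)).eq_or_lt with hB₀ | hB₀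
  · have hA₀ : μ A = μ ∅ := by
      rw [measure_empty]
      exact measure_mono_null hAB ((measureReal_eq_zero_iff (measure_ne_top μ B)).1 hB₀.symm)
    rw [← hB₀, _root_.div_zero, zero_smul, hinv A ∅ hA .empty hAB (Set.empty_subset B) hA₀,
      hm.map_empty_eq_zero]
  refine eq_of_forall_dist_le fun ε hε => ?_
  obtain ⟨δ, hδ, hsmallδ⟩ := hsmall (ε / 2) (half_pos hε)
  obtain ⟨n, hn⟩ := exists_nat_gt (μ.real B / δ)
  have hn₀ : (0 : ℝ) < n := (div_pos hB₀ hδ).trans hn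
  obtain ⟨A₁, hA₁B, hA₁, hμA₁⟩ := hμ.exists_subset_measureReal_eq hB (r := μ.real B / n)
    (by positivity) (div_le_self hB₀.le (Nat.one_le_cast.2 (Nat.cast_pos.1 hn₀)))
  have hA₁δ : μ.real A₁ ≤ δ := by
    rw [hμA₁, div_le_iff₀ hn₀]
    linarith [(div_lt_iff₀ hδ).1 hn]
  obtain ⟨A', -, hA', hdiff, hle⟩ := hm.exists_norm_sub_measureReal_div_smul_le hμ hinv hB hA₁ hA₁B
    (by rw [hμA₁]; positivity) n (by rw [hμA₁]; field_simp) hA hAB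
  calc dist (m A) ((μ.real A / μ.real B) • m B) ≤ ‖m (A \ A')‖ + ‖m A₁‖ := by
        rwa [dist_eq_norm]
    _ ≤ ε / 2 + ε / 2 :=
        add_le_add (hsmallδ _ (hA.diff hA') (hdiff.trans hA₁δ)) (hsmallδ _ hA₁ hA₁δ)
    _ = ε := add_halves ε

end Proportional

variable {Ω : Type*} [MeasurableSpace Ω] {μ : Measure Ω}

theorem measure_preimage_inter_of_eqOn_const {E : Type*} {g : Ω → E} {a : E} {T : Set Ω}
    (hg : Set.EqOn g (fun _ => a) T) (V : Set E) :
    μ (g ⁻¹' V ∩ T) = V.indicator (fun _ => μ T) a := by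
  by_cases ha : a ∈ V
  · rw [Set.indicator_of_mem ha, Set.inter_eq_self_of_subset_right fun ω hω => by
      simpa [Set.mem_preimage, hg hω] using ha]
  · rw [Set.indicator_of_notMem ha, Set.eq_empty_of_forall_notMem fun ω (hω : ω ∈ g ⁻¹' V ∩ T) =>
      ha (by simpa [hg hω.2] using hω.1), measure_empty]

section Law

variable {E : Type*} [AddZeroClass E] {X : Ω → E} {a v : E}

theorem measure_preimage_add_indicator_add {T : Set Ω} (hT : MeasurableSet T)
    (hTa : T ⊆ X ⁻¹' {a}) (V : Set E) :
    μ ((X + T.indicator fun _ => v) ⁻¹' V) + V.indicator (fun _ => μ T) a =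
      μ (X ⁻¹' V) + V.indicator (fun _ => μ T) (a + v) := by
  set g := X + T.indicator fun _ => v
  have hgT : Set.EqOn g (fun _ => a + v) T := fun ω hω => by
    have hXω : X ω = a := hTa hω
    simp [g, Set.indicator_of_mem hω, hXω]
  have hXT : Set.EqOn X (fun _ => a) T := fun ω hω => hTa hω
  have hdiff : g ⁻¹' V \ T = X ⁻¹' V \ T := by
    ext ω
    by_cases hω : ω ∈ T <;> simp [g, hω]
  rw [← measure_sdiff_add_inter (g ⁻¹' V) hT, ← measure_sdiff_add_inter (X ⁻¹' V) hT, hdiff,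
    measure_preimage_inter_of_eqOn_const hgT, measure_preimage_inter_of_eqOn_const hXT,
    add_right_comm]

theorem _root_.Measurable.add_indicator_const [MeasurableSpace E] [MeasurableAdd E]
    (hX : Measurable X) {T : Set Ω} (hT : MeasurableSet T) (v : E) :
    Measurable (X + T.indicator fun _ => v) := by
  classical
  have hpw : X + T.indicator (fun _ => v) = T.piecewise (fun ω => X ω + v) X := by
    ext ω
    by_cases hω : ω ∈ T <;> simp [hω]
  exact hpw ▸ (hX.add_const v).piecewise hT hX

theorem map_add_indicator_eq_of_measure_eq [MeasurableSpace E] [MeasurableAdd E]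
    [IsFiniteMeasure μ] (hX : Measurable X) {T T' : Set Ω} (hT : MeasurableSet T)
    (hT' : MeasurableSet T') (hTa : T ⊆ X ⁻¹' {a}) (hT'a : T' ⊆ X ⁻¹' {a}) (hμ : μ T = μ T') :
    μ.map (X + T.indicator fun _ => v) = μ.map (X + T'.indicator fun _ => v) := by
  ext V hV
  have hfin : V.indicator (fun _ => μ T) a ≠ ∞ := ne_top_of_le_ne_top (measure_ne_top μ T)
    (Set.indicator_apply_le' (fun _ => le_rfl) fun _ => zero_le)
  rw [Measure.map_apply (hX.add_indicator_const hT v) hV,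
    Measure.map_apply (hX.add_indicator_const hT' v) hV, ← ENNReal.add_left_inj hfin,
    measure_preimage_add_indicator_add hT hTa, hμ, measure_preimage_add_indicator_add hT' hT'a]

end Law

theorem setIntegral_sum_indicator_comp {E F : Type*} [MeasurableSpace E] [NormedAddCommGroup F]
    [NormedSpace ℝ F] [CompleteSpace F] [IsFiniteMeasure μ] {ι : Type*}
    (s : Finset ι) {X : Ω → E} (hX : Measurable X) {V : ι → Set E} (hV : ∀ k, MeasurableSet (V k))
    (c : ι → F) (A : Set Ω) :
    ∫ ω in A, ∑ k ∈ s, (V k).indicator (fun _ => c k) (X ω) ∂μ =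
      ∑ k ∈ s, μ.real (A ∩ X ⁻¹' V k) • c k := by
  have hXV : ∀ k, MeasurableSet (X ⁻¹' V k) := fun k => hX (hV k)
  have hcomp : ∀ k ω, (V k).indicator (fun _ => c k) (X ω) =
      (X ⁻¹' V k).indicator (fun _ => c k) ω := fun k ω => (Set.indicator_comp_right X).symm
  simp_rw [hcomp]
  rw [integral_finsetSum s fun k _ =>
    ((integrable_const (c k)).indicator (hXV k)).integrableOn]
  refine Finset.sum_congr rfl fun k _ => ?_
  rw [setIntegral_indicator (hXV k), setIntegral_const]

theorem MemLp.toLp_add_smul_indicatorConstLp_ae_eq {E : Type*} [NormedAddCommGroup E]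
    [NormedSpace ℝ E] {p : ℝ≥0∞} {f : Ω → E} (hf : MemLp f p μ) {s : Set Ω}
    (hs : MeasurableSet s) (hμs : μ s ≠ ∞) (t : ℝ) (c : E) :
    ⇑(hf.toLp f + t • indicatorConstLp p hs hμs c) =ᵐ[μ] f + s.indicator fun _ => t • c := by
  filter_upwards [Lp.coeFn_add (hf.toLp f) (t • indicatorConstLp p hs hμs c),
    Lp.coeFn_smul t (indicatorConstLp p hs hμs c), indicatorConstLp_coeFn (p := p) (hs := hs)
      (hμs := hμs) (c := c), hf.coeFn_toLp] with ω hadd hsmul hind hf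
  rw [hadd, Pi.add_apply, hsmul, Pi.smul_apply, hind, hf, Pi.add_apply]
  by_cases hω : ω ∈ s <;> simp [hω]

end MeasureTheory

namespace ContinuousLinearMap

variable {Ω E F : Type*} [MeasurableSpace Ω] {μ : Measure Ω} [IsFiniteMeasure μ]
  [NormedAddCommGroup E] [NormedSpace ℝ E] [NormedAddCommGroup F] [NormedSpace ℝ F]
  {p : ℝ≥0∞} [Fact (1 ≤ p)]

open Classical in
/-- The vector measure `m_L` of an operator `L` on `Lᵖ`, evaluated at `u`: `A ↦ L (u 1_A)`. -/
def indicatorMeasure (L : Lp E p μ →L[ℝ] F) (u : E) (A : Set Ω) : F :=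
  if hA : MeasurableSet A then L (indicatorConstLp p hA (measure_ne_top μ A) u) else 0

variable (L : Lp E p μ →L[ℝ] F) (u : E)

theorem indicatorMeasure_of_measurableSet {A : Set Ω} (hA : MeasurableSet A) :
    L.indicatorMeasure u A = L (indicatorConstLp p hA (measure_ne_top μ A) u) :=
  dif_pos hA

theorem finMeasAdditive_indicatorMeasure : FinMeasAdditive μ (L.indicatorMeasure u) :=
  fun A A' hA hA' hμA hμA' hAA' => by
    rw [indicatorMeasure_of_measurableSet L u (hA.union hA'), indicatorMeasure_of_measurableSet,
      indicatorMeasure_of_measurableSet, indicatorConstLp_disjoint_union hA hA' hμA hμA' hAA',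
      map_add]

theorem exists_norm_indicatorMeasure_le (hp : p ≠ ∞) :
    ∀ ε > 0, ∃ δ > 0, ∀ A, MeasurableSet A → μ.real A ≤ δ → ‖L.indicatorMeasure u A‖ ≤ ε := by
  intro ε hε
  have hp₀ : 0 < p.toReal :=
    ENNReal.toReal_pos (zero_lt_one.trans_le (Fact.out : 1 ≤ p)).ne' hp
  set C := ‖L‖ * ‖u‖ + 1
  have hC : 0 < C := by positivity
  refine ⟨(ε / C) ^ p.toReal, by positivity, fun A hA hAδ => ?_⟩
  have hroot : μ.real A ^ (1 / p.toReal) ≤ ε / C := by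
    calc μ.real A ^ (1 / p.toReal) ≤ ((ε / C) ^ p.toReal) ^ (1 / p.toReal) := by gcongr
      _ = ε / C := by rw [← Real.rpow_mul (by positivity), mul_one_div_cancel hp₀.ne',
          Real.rpow_one]
  rw [indicatorMeasure_of_measurableSet L u hA]
  calc ‖L (indicatorConstLp p hA _ u)‖ ≤ ‖L‖ * (‖u‖ * μ.real A ^ (1 / p.toReal)) :=
        L.le_opNorm_of_le norm_indicatorConstLp_le
    _ ≤ C * (ε / C) := by
        rw [← mul_assoc]
        gcongr
        linarith
    _ = ε := mul_div_cancel₀ ε hC.ne'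

theorem indicatorMeasure_eq_of_measure_eq [MeasurableSpace E] [MeasurableAdd E]
    {fhat : Lp E p μ → F} (hlaw : ∀ X X' : Lp E p μ, μ.map ⇑X = μ.map ⇑X' → fhat X = fhat X')
    {f : Ω → E} (hfm : Measurable f) (hf : MemLp f p μ) (hL : HasFDerivAt fhat L (hf.toLp f))
    {a : E} {T T' : Set Ω} (hT : MeasurableSet T) (hT' : MeasurableSet T')
    (hTa : T ⊆ f ⁻¹' {a}) (hT'a : T' ⊆ f ⁻¹' {a}) (hμ : μ T = μ T') :
    L.indicatorMeasure u T = L.indicatorMeasure u T' := by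
  rw [indicatorMeasure_of_measurableSet L u hT, indicatorMeasure_of_measurableSet L u hT']
  refine hL.apply_eq_of_forall_add_smul_eq fun t => hlaw _ _ ?_
  rw [Measure.map_congr (hf.toLp_add_smul_indicatorConstLp_ae_eq hT _ t u),
    Measure.map_congr (hf.toLp_add_smul_indicatorConstLp_ae_eq hT' _ t u)]
  exact map_add_indicator_eq_of_measure_eq hfm hT hT' hTa hT'a hμ

end ContinuousLinearMap

theorem stmt13_general {Ω H U : Type*}
    [MeasurableSpace Ω]
    (P : Measure Ω) [IsProbabilityMeasure P]
    (hatomless : ∀ A : Set Ω, MeasurableSet A → 0 < P A →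
      ∃ B : Set Ω, MeasurableSet B ∧ B ⊆ A ∧ 0 < P B ∧ P B < P A)
    [NormedAddCommGroup H] [InnerProductSpace ℝ H]
    [MeasurableSpace H] [BorelSpace H]
    [NormedAddCommGroup U] [InnerProductSpace ℝ U] [CompleteSpace U]
    (fhat : Lp H 2 P → U)
    (hlaw : ∀ X X' : Lp H 2 P, P.map ⇑X = P.map ⇑X' → fhat X = fhat X')
    (Df : Lp H 2 P → (Lp H 2 P →L[ℝ] U))
    (hderiv : ∀ X : Lp H 2 P, HasFDerivAt fhat (Df X) X)
    (X0 : Ω → H) (hX0meas : Measurable X0) (hX0 : MemLp X0 2 P)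
    (N : ℕ) (x : Fin N → H) (hinj : Function.Injective x)
    (hvals : ∀ ω, ∃ k, X0 ω = x k) :
    ∀ (A : Set Ω) (hA : MeasurableSet A) (u : H),
      (∫ ω in A,
          (∑ k, Set.indicator ({x k} : Set H)
            (fun _ => (P (X0 ⁻¹' {x k})).toReal⁻¹ •
              Df (MemLp.toLp X0 hX0)
                (indicatorConstLp 2 (hX0meas (isClosed_singleton.measurableSet))
                  (measure_ne_top P (X0 ⁻¹' {x k})) u)) (X0 ω)) ∂P) =
        Df (MemLp.toLp X0 hX0) (indicatorConstLp 2 hA (measure_ne_top P A) u) := by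
  intro A hA u
  set L := Df (hX0.toLp X0)
  set B : Fin N → Set Ω := fun k => X0 ⁻¹' {x k}
  have hB : ∀ k, MeasurableSet (B k) := fun k => hX0meas (measurableSet_singleton _)
  have hm := L.finMeasAdditive_indicatorMeasure u
  have hscale : ∀ k, L.indicatorMeasure u (A ∩ B k) =
      (P.real (A ∩ B k) / P.real (B k)) • L.indicatorMeasure u (B k) := fun k =>
    hm.eq_measureReal_div_smul hatomless
      (L.exists_norm_indicatorMeasure_le u ENNReal.ofNat_ne_top)
      (fun S S' hS hS' hSB hS'B => L.indicatorMeasure_eq_of_measure_eq u hlaw hX0meas hX0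
        (hderiv _) hS hS' hSB hS'B)
      (hB k) (hA.inter (hB k)) Set.inter_subset_right
  calc _ = ∑ k, P.real (A ∩ B k) • ((P (B k)).toReal⁻¹ • L.indicatorMeasure u (B k)) := by
        rw [setIntegral_sum_indicator_comp _ hX0meas (fun k => measurableSet_singleton (x k))]
        simp only [L.indicatorMeasure_of_measurableSet u (hB _)]
        rfl
    _ = ∑ k, L.indicatorMeasure u (A ∩ B k) := by
        simp only [hscale, smul_smul, div_eq_mul_inv, measureReal_def]
    _ = L.indicatorMeasure u A := hm.sum_inter_preimage_singleton hX0meas hinj hvals hA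
    _ = _ := L.indicatorMeasure_of_measurableSet u hA

/-- Radon–Nikodym derivative of the measure `m_{μ₀}` with respect to `μ₀` in the discrete
case: for `X₀` taking finitely many values `x₁,…,x_N` with positive probability, the step
map `g(x) = ∑ₖ (m_{μ₀}({xₖ})/μ₀({xₖ})) 1_{{xₖ}}(x)` satisfies
`E[1_A · g(X₀)] = m_{Df̂(X₀)}(A)` for all measurable `A` (tested against every `u ∈ H`). -/
theorem stmt13 {Ω H U : Type*}
    [MeasurableSpace Ω] [TopologicalSpace Ω] [PolishSpace Ω] [BorelSpace Ω]
    (P : Measure Ω) [IsProbabilityMeasure P]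
    (hatomless : ∀ A : Set Ω, MeasurableSet A → 0 < P A →
      ∃ B : Set Ω, MeasurableSet B ∧ B ⊆ A ∧ 0 < P B ∧ P B < P A)
    [NormedAddCommGroup H] [InnerProductSpace ℝ H] [CompleteSpace H]
    [SecondCountableTopology H] [MeasurableSpace H] [BorelSpace H]
    [NormedAddCommGroup U] [InnerProductSpace ℝ U] [CompleteSpace U]
    (fhat : Lp H 2 P → U)
    (hlaw : ∀ X X' : Lp H 2 P, P.map ⇑X = P.map ⇑X' → fhat X = fhat X')
    (Df : Lp H 2 P → (Lp H 2 P →L[ℝ] U))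
    (hderiv : ∀ X : Lp H 2 P, HasFDerivAt fhat (Df X) X)
    (hΛfin : ∀ X : Lp H 2 P, opSemiVar P 2 (Df X) < ∞)
    (hΛcont : ∀ (X : Lp H 2 P) (ε : ℝ≥0∞), 0 < ε → ∃ δ > (0 : ℝ), ∀ X' : Lp H 2 P,
      ‖X' - X‖ < δ → opSemiVar P 2 (Df X' - Df X) < ε)
    (X0 : Ω → H) (hX0meas : Measurable X0) (hX0 : MemLp X0 2 P)
    (N : ℕ) (x : Fin N → H) (hinj : Function.Injective x)
    (hvals : ∀ ω, ∃ k, X0 ω = x k)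
    (hpos : ∀ k, 0 < P (X0 ⁻¹' {x k})) :
    ∀ (A : Set Ω) (hA : MeasurableSet A) (u : H),
      (∫ ω in A,
          (∑ k, Set.indicator ({x k} : Set H)
            (fun _ => (P (X0 ⁻¹' {x k})).toReal⁻¹ •
              Df (MemLp.toLp X0 hX0)
                (indicatorConstLp 2 (hX0meas (isClosed_singleton.measurableSet))
                  (measure_ne_top P (X0 ⁻¹' {x k})) u)) (X0 ω)) ∂P) =
        Df (MemLp.toLp X0 hX0) (indicatorConstLp 2 hA (measure_ne_top P A) u) :=
  stmt13_general P hatomless fhat hlaw Df hderiv X0 hX0meas hX0 N x hinj hvals
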